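/- Let V be a finite-dimensional real vector space, L ⊆ V a full lattice (the ℤ-span of a basis of V), and T = V ⧸ L the quotient topological abelian group. Let W' be a finite group of linear automorphisms of V with w(L) = L for all w ∈ W', acting on T by w • [v] = [w(v)], and suppose the fixed subspace V^{W'} = {v ∈ V : w(v) = v for all w ∈ W'} is zero. Then every point t ∈ T fixed by all elements of W' lies in the image in T of the subgroup (1/|W'|)·L = {v ∈ V : |W'|·v ∈ L} of V. -/

import Mathlib

/-! Averaging over the group: if `w v ≡ v` modulo `L` for every `w`, then summing
`w v - v` over the group gives `∑ w, w v - |W'| • v ∈ L`, and the sum `∑ w, w v` is a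
`W'`-fixed vector, hence zero. -/

open Finset

section Averaging

variable {G M : Type*} [Group G] [Fintype G] [AddCommGroup M] [DistribMulAction G M]

theorem smul_sum_smul_eq (h : G) (v : M) : h • ∑ g : G, g • v = ∑ g : G, g • v := by
  rw [smul_sum]
  simp_rw [smul_smul]
  exact Fintype.sum_equiv (Equiv.mulLeft h) _ _ fun _ => rfl

theorem card_nsmul_mem_of_forall_smul_sub_mem (L : AddSubgroup M)
    (hfix : ∀ x : M, (∀ g : G, g • x = x) → x = 0) {v : M}
    (hv : ∀ g : G, g • v - v ∈ L) : Fintype.card G • v ∈ L := by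
  have hsum : ∑ g : G, g • v - Fintype.card G • v ∈ L := by
    rw [← card_univ, ← sum_const, ← sum_sub_distrib]
    exact L.sum_mem fun g _ => hv g
  rw [hfix _ fun h => smul_sum_smul_eq h v, zero_sub] at hsum
  simpa using L.neg_mem hsum

end Averaging

theorem stmt_5_general {V : Type*} [AddCommGroup V] [Module ℝ V]
    (L : Submodule ℤ V)
    (W' : Subgroup (V ≃ₗ[ℝ] V)) [Finite W']
    (hfix : {v : V | ∀ w ∈ W', w v = v} = {0}) :
    ∀ t : V ⧸ L.toAddSubgroup,
      (∀ w ∈ W', ∀ v : V,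
        (QuotientAddGroup.mk v : V ⧸ L.toAddSubgroup) = t →
        (QuotientAddGroup.mk (w v) : V ⧸ L.toAddSubgroup) = t) →
      ∃ v : V, (Nat.card W') • v ∈ L ∧
        (QuotientAddGroup.mk v : V ⧸ L.toAddSubgroup) = t := by
  intro t ht
  have := Fintype.ofFinite W'
  obtain ⟨v, rfl⟩ := QuotientAddGroup.mk_surjective t
  refine ⟨v, ?_, rfl⟩
  have hW'fix : ∀ x : V, (∀ w : W', w • x = x) → x = 0 := fun x hx =>
    hfix.subset fun w hw => hx ⟨w, hw⟩
  have hv : ∀ w : W', w • v - v ∈ L.toAddSubgroup := fun w => by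
    show (w : V ≃ₗ[ℝ] V) v - v ∈ L
    simpa [neg_add_eq_sub] using QuotientAddGroup.eq.mp (ht w w.2 v rfl).symm
  rw [Nat.card_eq_fintype_card]
  exact card_nsmul_mem_of_forall_smul_sub_mem _ hW'fix hv

/-- Let `V` be a finite-dimensional real vector space, `L` the `ℤ`-span of a basis of
`V`, `T = V ⧸ L` the quotient torus, and `W'` a finite group of linear automorphisms of
`V` preserving `L`, acting on `T` by `w • [v] = [w v]`, with zero fixed subspace
`V^{W'} = 0`.  Then every `W'`-fixed point of `T` is the image of a vector `v ∈ V` with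
`|W'| • v ∈ L`. -/
theorem stmt_5 {V : Type*} [AddCommGroup V] [Module ℝ V] [FiniteDimensional ℝ V]
    {ι : Type*} [Fintype ι] (b : Module.Basis ι ℝ V)
    (L : Submodule ℤ V) (hL : L = Submodule.span ℤ (Set.range b))
    (W' : Subgroup (V ≃ₗ[ℝ] V)) [Finite W']
    (hW'L : ∀ w ∈ W', ⇑w '' (L : Set V) = (L : Set V))
    (hfix : {v : V | ∀ w ∈ W', w v = v} = {0}) :
    ∀ t : V ⧸ L.toAddSubgroup,
      (∀ w ∈ W', ∀ v : V,
        (QuotientAddGroup.mk v : V ⧸ L.toAddSubgroup) = t →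
        (QuotientAddGroup.mk (w v) : V ⧸ L.toAddSubgroup) = t) →
      ∃ v : V, (Nat.card W') • v ∈ L ∧
        (QuotientAddGroup.mk v : V ⧸ L.toAddSubgroup) = t :=
  stmt_5_general L W' hfix
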